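/- arXiv:2108.03455 — 4 statements merged into one kernel-verified Lean document; each statement's English description precedes it below -/
import Mathlib

section
/- For every integer t ≥ 0 and every vertex v reachable from s, D_{2t+1}(v) is at most the weight of every directed path from s to v that has at most ℓ(v) + t edges (i.e., of every t+light path from s to v). -/
/-- `L` is a directed walk from `u` to `v`: a nonempty list of vertices starting at `u`,
ending at `v`, with consecutive vertices joined by edges. Its number of edges is `L.length - 1`. -/
def IsWalk {V : Type} (E : V → V → Prop) (u v : V) (L : List V) : Prop :=
  L ≠ [] ∧ L.head? = some u ∧ L.getLast? = some v ∧ L.Chain' E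

/-- A directed path: a walk with pairwise distinct vertices. -/
def IsPath {V : Type} (E : V → V → Prop) (u v : V) (L : List V) : Prop :=
  IsWalk E u v L ∧ L.Nodup

/-- The weight of a walk: the sum of the weights of its consecutive edges
(the trivial walk has weight 0). -/
def walkWeight {V : Type} (w : V → V → ℝ) (L : List V) : ℝ :=
  ((L.zip L.tail).map fun e => w e.1 e.2).sum

/-- `v` is reachable from `u`. -/
def Reaches {V : Type} (E : V → V → Prop) (u v : V) : Prop :=
  ∃ L, IsWalk E u v L

/-- BFS level: the minimum number of edges of a directed walk from `s` to `v`. -/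
noncomputable def level {V : Type} (E : V → V → Prop) (s v : V) : ℕ :=
  sInf {k | ∃ L, IsWalk E s v L ∧ L.length = k + 1}

/-- The forward pass: `D'(v_j) = min (D(v_j), min over edges (v_i,v_j) with i < j of
`D'(v_i) + w(v_i,v_j))`, computed for `j` in increasing order (over the empty set the
inner minimum is `+∞`, so in particular `D'(v_1) = D(v_1)`). -/
noncomputable def forwardPass (n : ℕ) (E : Fin n → Fin n → Prop) [DecidableRel E]
    (w : Fin n → Fin n → ℝ) (D : Fin n → WithTop ℝ) : Fin n → WithTop ℝ
  | j =>
    min (D j)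
      (((Finset.univ.filter (fun i : Fin n => i < j ∧ E i j)).attach).inf
        (fun i => forwardPass n E w D i.1 + (w i.1 j : WithTop ℝ)))
  termination_by j => j.val
  decreasing_by
    exact (Finset.mem_filter.mp i.2).2.1

/-- The backward pass: `D'(v_j) = min (D(v_j), min over edges (v_i,v_j) with i > j of
`D'(v_i) + w(v_i,v_j))`, computed for `j` in decreasing order (in particular
`D'(v_n) = D(v_n)`). -/
noncomputable def backwardPass (n : ℕ) (E : Fin n → Fin n → Prop) [DecidableRel E]
    (w : Fin n → Fin n → ℝ) (D : Fin n → WithTop ℝ) : Fin n → WithTop ℝ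
  | j =>
    min (D j)
      (((Finset.univ.filter (fun i : Fin n => j < i ∧ E i j)).attach).inf
        (fun i => backwardPass n E w D i.1 + (w i.1 j : WithTop ℝ)))
  termination_by j => n - j.val
  decreasing_by
    have h1 : j.val < i.1.val := (Finset.mem_filter.mp i.2).2.1
    have h2 : i.1.val < n := i.1.isLt
    omega

/-- `Dseq n E w s k` is `D_k` : `D_0(s) = 0`, `D_0 = +∞` elsewhere; `D_1` is the forward
pass of `D_0`; `D_{2k}` is the backward pass of `D_{2k-1}`; `D_{2k+1}` is the forward pass
of `D_{2k}` (for `k ≥ 1`). -/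
noncomputable def Dseq (n : ℕ) (E : Fin n → Fin n → Prop) [DecidableRel E]
    (w : Fin n → Fin n → ℝ) (s : Fin n) : ℕ → Fin n → WithTop ℝ
  | 0 => fun j => if j = s then 0 else ⊤
  | (k + 1) =>
    if k % 2 = 0 then forwardPass n E w (Dseq n E w s k)
    else backwardPass n E w (Dseq n E w s k)

/- A path from `s` to `v` with `b` backward edges (edges going down in the enumeration) has at
least `ℓ(v) + b` edges: a backward edge does not increase the BFS level, because levels are
monotone along the enumeration, and a forward edge increases it by at most one. On the other
hand `D_{2a+1}(v)` is at most the weight of every path from `s` to `v` with at most `a` backward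
edges: each forward pass relaxes a maximal run of forward edges in order, and each backward pass
relaxes one backward edge. A `t`-light path therefore has at most `t` backward edges. -/

section Walks

variable {V : Type} {E : V → V → Prop}

theorem List.zip_tail_concat {α : Type*} {M : List α} {u : α} (hu : M.getLast? = some u)
    (v : α) : (M ++ [v]).zip (M ++ [v]).tail = M.zip M.tail ++ [(u, v)] := by
  induction M with
  | nil => simp at hu
  | cons a M ih =>
    cases M with
    | nil => simp_all
    | cons b M =>
      simp only [List.cons_append, List.tail_cons, List.zip_cons_cons] at ih ⊢
      rw [ih (by simpa using hu)]

theorem walkWeight_concat (w : V → V → ℝ) {M : List V} {u : V} (hu : M.getLast? = some u)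
    (v : V) : walkWeight w (M ++ [v]) = walkWeight w M + w u v := by
  simp [walkWeight, List.zip_tail_concat hu]

theorem isWalk_singleton (s : V) : IsWalk E s s [s] :=
  ⟨by simp, rfl, rfl, List.isChain_singleton _⟩

theorem IsWalk.concat {s u v : V} {M : List V} (hM : IsWalk E s u M) (huv : E u v) :
    IsWalk E s v (M ++ [v]) := by
  obtain ⟨hne, hs, hu, hchain⟩ := hM
  refine ⟨by simp, by rwa [List.head?_append_of_ne_nil _ hne], by simp, ?_⟩
  exact hchain.append (List.isChain_singleton v) (by simp_all)

theorem IsWalk.end_mem {s u : V} {M : List V} (hM : IsWalk E s u M) : u ∈ M :=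
  List.mem_of_getLast? hM.2.2.1

theorem IsWalk.concat_induction {s : V} {P : (v : V) → (L : List V) → IsWalk E s v L → Prop}
    (nil : P s [s] (isWalk_singleton s))
    (concat : ∀ {u v : V} {M : List V} (hM : IsWalk E s u M) (huv : E u v),
      P u M hM → P v (M ++ [v]) (hM.concat huv))
    {v : V} {L : List V} (hL : IsWalk E s v L) : P v L hL := by
  induction L using List.reverseRecOn generalizing v with
  | nil => exact absurd rfl hL.1
  | append_singleton M x ih =>
    obtain rfl : x = v := by simpa using hL.2.2.1
    rcases M.eq_nil_or_concat' with rfl | ⟨M', u, rfl⟩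
    · obtain rfl : x = s := by simpa using hL.2.1
      exact nil
    · have hchain := List.isChain_append.mp hL.2.2.2
      have hM : IsWalk E s u (M' ++ [u]) :=
        ⟨by simp, by simpa [List.head?_append_of_ne_nil] using hL.2.1, by simp, hchain.1⟩
      exact concat hM (hchain.2.2 u (by simp) x (by simp)) (ih hM)

theorem level_self (s : V) : level E s s = 0 :=
  Nat.eq_zero_of_le_zero (Nat.sInf_le ⟨[s], isWalk_singleton s, rfl⟩)

theorem Reaches.exists_isWalk_length_eq_level {s v : V} (h : Reaches E s v) :
    ∃ L, IsWalk E s v L ∧ L.length = level E s v + 1 := by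
  obtain ⟨L, hL⟩ := h
  refine Nat.sInf_mem (s := {k | ∃ L, IsWalk E s v L ∧ L.length = k + 1})
    ⟨L.length - 1, L, hL, ?_⟩
  have := List.length_pos_iff.mpr hL.1
  omega

theorem level_le_succ_of_edge {s u v : V} (hu : Reaches E s u) (huv : E u v) :
    level E s v ≤ level E s u + 1 := by
  obtain ⟨M, hM, hlen⟩ := hu.exists_isWalk_length_eq_level
  exact Nat.sInf_le ⟨M ++ [v], hM.concat huv, by simp [hlen]⟩

end Walks

section BackwardEdges

variable {V : Type} [LinearOrder V] {E : V → V → Prop}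

def backwardEdgeCount (L : List V) : ℕ :=
  (L.zip L.tail).countP fun e => e.2 < e.1

theorem backwardEdgeCount_concat {M : List V} {u : V} (hu : M.getLast? = some u) (v : V) :
    backwardEdgeCount (M ++ [v]) = backwardEdgeCount M + if v < u then 1 else 0 := by
  simp [backwardEdgeCount, List.zip_tail_concat hu, List.countP_cons]

theorem level_add_backwardEdgeCount_lt_length {s v : V}
    (hmono : MonotoneOn (level E s) {x | Reaches E s x}) {L : List V} (hL : IsWalk E s v L) :
    level E s v + backwardEdgeCount L < L.length := by
  induction hL using IsWalk.concat_induction with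
  | nil => simp [level_self, backwardEdgeCount]
  | @concat u v M hM huv ih =>
    have hu : Reaches E s u := ⟨M, hM⟩
    rw [backwardEdgeCount_concat hM.2.2.1, List.length_append, List.length_singleton]
    split_ifs with hvu
    · have := hmono (⟨_, hM.concat huv⟩ : Reaches E s v) hu hvu.le
      omega
    · have := level_le_succ_of_edge hu huv
      omega

end BackwardEdges

section Passes

variable {n : ℕ} {E : Fin n → Fin n → Prop} [DecidableRel E] {w : Fin n → Fin n → ℝ}

theorem forwardPass_le (D : Fin n → WithTop ℝ) (j : Fin n) :
    forwardPass n E w D j ≤ D j := by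
  rw [forwardPass]
  exact min_le_left _ _

theorem forwardPass_le_add_of_lt (D : Fin n → WithTop ℝ) {i j : Fin n} (hij : i < j)
    (hE : E i j) : forwardPass n E w D j ≤ forwardPass n E w D i + (w i j : WithTop ℝ) := by
  rw [forwardPass]
  refine (min_le_right _ _).trans ?_
  have hi : i ∈ Finset.univ.filter (fun i : Fin n => i < j ∧ E i j) := by simp [hij, hE]
  exact Finset.inf_le (Finset.mem_attach _ ⟨i, hi⟩)

theorem backwardPass_le (D : Fin n → WithTop ℝ) (j : Fin n) :
    backwardPass n E w D j ≤ D j := by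
  rw [backwardPass]
  exact min_le_left _ _

theorem backwardPass_le_add_of_lt (D : Fin n → WithTop ℝ) {i j : Fin n} (hji : j < i)
    (hE : E i j) : backwardPass n E w D j ≤ backwardPass n E w D i + (w i j : WithTop ℝ) := by
  rw [backwardPass]
  refine (min_le_right _ _).trans ?_
  have hi : i ∈ Finset.univ.filter (fun i : Fin n => j < i ∧ E i j) := by simp [hji, hE]
  exact Finset.inf_le (Finset.mem_attach _ ⟨i, hi⟩)

variable (s : Fin n)

theorem Dseq_odd (a : ℕ) :
    Dseq n E w s (2 * a + 1) = forwardPass n E w (Dseq n E w s (2 * a)) := by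
  simp [Dseq]

theorem Dseq_even (a : ℕ) :
    Dseq n E w s (2 * a + 2) = backwardPass n E w (Dseq n E w s (2 * a + 1)) := by
  rw [Dseq, if_neg (by omega)]

theorem Dseq_antitone (j : Fin n) : Antitone fun k => Dseq n E w s k j := by
  refine antitone_nat_of_succ_le fun k => ?_
  rw [Dseq]
  split
  · exact forwardPass_le _ j
  · exact backwardPass_le _ j

theorem Dseq_le_walkWeight {v : Fin n} {L : List (Fin n)} (hL : IsWalk E s v L) (hnd : L.Nodup)
    {a : ℕ} (hback : backwardEdgeCount L ≤ a) :
    Dseq n E w s (2 * a + 1) v ≤ (walkWeight w L : WithTop ℝ) := by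
  induction hL using IsWalk.concat_induction generalizing a with
  | nil =>
    calc Dseq n E w s (2 * a + 1) s ≤ Dseq n E w s 0 s := Dseq_antitone s s (Nat.zero_le _)
      _ = (walkWeight w [s] : WithTop ℝ) := by simp [Dseq, walkWeight]
  | @concat u v M hM huv ih =>
    have hndM : M.Nodup := hnd.sublist (List.sublist_append_left M [v])
    have huv_ne : u ≠ v := fun h => List.disjoint_of_nodup_append hnd (h ▸ hM.end_mem)
      (List.mem_singleton_self v)
    rw [walkWeight_concat w hM.2.2.1, WithTop.coe_add]
    rw [backwardEdgeCount_concat hM.2.2.1] at hback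
    rcases huv_ne.lt_or_gt with huv_lt | hvu
    · rw [if_neg huv_lt.not_gt] at hback
      calc Dseq n E w s (2 * a + 1) v ≤ Dseq n E w s (2 * a + 1) u + (w u v : WithTop ℝ) := by
            rw [Dseq_odd]
            exact forwardPass_le_add_of_lt _ huv_lt huv
        _ ≤ _ := by gcongr; exact ih hndM (by omega)
    · rw [if_pos hvu] at hback
      obtain ⟨a, rfl⟩ : ∃ a', a = a' + 1 := ⟨a - 1, by omega⟩
      calc Dseq n E w s (2 * (a + 1) + 1) v ≤ Dseq n E w s (2 * a + 2) v :=
            Dseq_antitone s v (by omega)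
        _ ≤ Dseq n E w s (2 * a + 2) u + (w u v : WithTop ℝ) := by
            rw [Dseq_even]
            exact backwardPass_le_add_of_lt _ hvu huv
        _ ≤ Dseq n E w s (2 * a + 1) u + (w u v : WithTop ℝ) := by
            gcongr
            exact Dseq_antitone s u (by omega)
        _ ≤ _ := by gcongr; exact ih hndM (by omega)

end Passes

theorem stmt0_general (n : ℕ) (E : Fin n → Fin n → Prop) [DecidableRel E]
    (w : Fin n → Fin n → ℝ) (s : Fin n)
    (horder : ∀ i j : Fin n, i < j → Reaches E s i → Reaches E s j →
      level E s i ≤ level E s j)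
    (t : ℕ) (v : Fin n)
    (L : List (Fin n)) (hL : IsPath E s v L) (hlen : L.length ≤ level E s v + t + 1) :
    Dseq n E w s (2 * t + 1) v ≤ (walkWeight w L : WithTop ℝ) := by
  have hmono : MonotoneOn (level E s) {x | Reaches E s x} :=
    monotoneOn_iff_forall_lt.mpr fun i hi j hj hij => horder i j hij hi hj
  have hback := level_add_backwardEdgeCount_lt_length hmono hL.1
  exact Dseq_le_walkWeight s hL.1 hL.2 (by omega)

/-- For every integer `t ≥ 0` and every vertex `v` reachable from the
source `s = v_1` (here `V = Fin n` is enumerated so that BFS levels are nondecreasing and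
unreachable vertices come after all reachable ones), `D_{2t+1}(v)` is at most the weight
of every directed path from `s` to `v` with at most `ℓ(v) + t` edges (i.e. of every
`t+`light path from `s` to `v`). -/
theorem stmt0 (n : ℕ) (E : Fin n → Fin n → Prop) [DecidableRel E]
    (w : Fin n → Fin n → ℝ) (s : Fin n) (hs : s.val = 0)
    (horder : ∀ i j : Fin n, i < j → Reaches E s i → Reaches E s j →
      level E s i ≤ level E s j)
    (hafter : ∀ i j : Fin n, i < j → Reaches E s j → Reaches E s i)
    (t : ℕ) (v : Fin n) (hv : Reaches E s v)
    (L : List (Fin n)) (hL : IsPath E s v L) (hlen : L.length ≤ level E s v + t + 1) :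
    Dseq n E w s (2 * t + 1) v ≤ (walkWeight w L : WithTop ℝ) :=
  stmt0_general n E w s horder t v L hL hlen
end

section
/- For every k ≥ 0 and every vertex v, if D_k(v) < +∞ then there exists a directed walk from s to v whose weight equals D_k(v). -/
/-!
Each pass is a relaxation `D' v = min (D v) (min_{i ∈ S v} D' i + w i v)` over edges `(i, v)`
whose sources `i` are computed before `v`. A finite `D' v` is thus either inherited from `D` or
equals `D' i + w i v` for such an edge, and by well-founded induction along the order of
computation it is the weight of a walk to `i` extended by that edge. Induction on `k` finishes.
-/

variable {V : Type}

lemma walkWeight_cons_cons (w : V → V → ℝ) (a b : V) (t : List V) :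
    walkWeight w (a :: b :: t) = w a b + walkWeight w (b :: t) := by
  simp [walkWeight]

lemma walkWeight_append_singleton (w : V → V → ℝ) :
    ∀ {L : List V} {i : V} (j : V), L.getLast? = some i →
      walkWeight w (L ++ [j]) = walkWeight w L + w i j
  | [], _, _, h => by simp at h
  | [a], i, j, h => by
    obtain rfl : a = i := by simpa using h
    simp [walkWeight]
  | a :: b :: t, i, j, h => by
    have ih := walkWeight_append_singleton w (L := b :: t) j (by simpa using h)
    simp only [List.cons_append] at ih ⊢
    rw [walkWeight_cons_cons, walkWeight_cons_cons, ih, add_assoc]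

lemma IsWalk.concat_s1 {E : V → V → Prop} {s i j : V} {L : List V}
    (h : IsWalk E s i L) (hij : E i j) : IsWalk E s j (L ++ [j]) := by
  obtain ⟨hne, hhead, hlast, hchain⟩ := h
  refine ⟨by simp, by rwa [List.head?_append_of_ne_nil _ hne], by simp, ?_⟩
  refine hchain.append (List.isChain_singleton j) ?_
  simp [hlast, hij]

def RealizedByWalks (E : V → V → Prop) (w : V → V → ℝ) (s : V) (D : V → WithTop ℝ) : Prop :=
  ∀ v, D v < ⊤ → ∃ L, IsWalk E s v L ∧ D v = (walkWeight w L : WithTop ℝ)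

lemma RealizedByWalks.of_relax {E : V → V → Prop} {w : V → V → ℝ} {s : V}
    {r : V → V → Prop} (hr : WellFounded r) (S : V → Finset V)
    (hS : ∀ v, ∀ i ∈ S v, r i v ∧ E i v) {D D' : V → WithTop ℝ}
    (hD' : ∀ v, D' v = min (D v) ((S v).inf fun i => D' i + w i v))
    (hD : RealizedByWalks E w s D) : RealizedByWalks E w s D' := by
  intro v
  induction v using hr.induction with
  | _ v ih =>
    intro hv
    rw [hD'] at hv ⊢
    rcases min_cases (D v) ((S v).inf fun i => D' i + w i v) with ⟨heq, -⟩ | ⟨heq, -⟩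
    · rw [heq] at hv ⊢
      exact hD v hv
    · rw [heq] at hv ⊢
      have hne : (S v).Nonempty :=
        Finset.nonempty_iff_ne_empty.2 fun hempty => by simp [hempty] at hv
      obtain ⟨i, hi, hmin⟩ := Finset.exists_mem_eq_inf (S v) hne fun i => D' i + w i v
      rw [hmin] at hv ⊢
      obtain ⟨hri, hE⟩ := hS v i hi
      obtain ⟨L, hL, hLw⟩ := ih i hri (WithTop.add_lt_top.mp hv).1
      refine ⟨L ++ [v], hL.concat_s1 hE, ?_⟩
      rw [hLw, walkWeight_append_singleton w v hL.2.2.1]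
      push_cast
      rfl

section Passes

variable {n : ℕ} {E : Fin n → Fin n → Prop} [DecidableRel E] {w : Fin n → Fin n → ℝ}

lemma forwardPass_eq (D : Fin n → WithTop ℝ) (j : Fin n) :
    forwardPass n E w D j = min (D j)
      ((Finset.univ.filter fun i => i < j ∧ E i j).inf fun i => forwardPass n E w D i + w i j) := by
  rw [forwardPass]
  exact congrArg _ (Finset.inf_attach _ fun i => forwardPass n E w D i + w i j)

lemma backwardPass_eq (D : Fin n → WithTop ℝ) (j : Fin n) :
    backwardPass n E w D j = min (D j)
      ((Finset.univ.filter fun i => j < i ∧ E i j).inf fun i => backwardPass n E w D i + w i j) := by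
  rw [backwardPass]
  exact congrArg _ (Finset.inf_attach _ fun i => backwardPass n E w D i + w i j)

lemma RealizedByWalks.forwardPass {s : Fin n} {D : Fin n → WithTop ℝ}
    (hD : RealizedByWalks E w s D) : RealizedByWalks E w s (forwardPass n E w D) :=
  hD.of_relax wellFounded_lt _ (fun _ _ hi => (Finset.mem_filter.1 hi).2) (forwardPass_eq D)

lemma RealizedByWalks.backwardPass {s : Fin n} {D : Fin n → WithTop ℝ}
    (hD : RealizedByWalks E w s D) : RealizedByWalks E w s (backwardPass n E w D) :=
  hD.of_relax wellFounded_gt _ (fun _ _ hi => (Finset.mem_filter.1 hi).2) (backwardPass_eq D)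

lemma realizedByWalks_Dseq (s : Fin n) (k : ℕ) : RealizedByWalks E w s (Dseq n E w s k) := by
  induction k with
  | zero =>
    intro v hv
    by_cases hvs : v = s
    · subst hvs
      exact ⟨[v], ⟨by simp, rfl, rfl, List.isChain_singleton v⟩, by simp [Dseq, walkWeight]⟩
    · simp [Dseq, hvs] at hv
  | succ k ih =>
    rw [Dseq]
    split_ifs
    · exact ih.forwardPass
    · exact ih.backwardPass

end Passes

theorem stmt1_general (n : ℕ) (E : Fin n → Fin n → Prop) [DecidableRel E]
    (w : Fin n → Fin n → ℝ) (s : Fin n)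
    (k : ℕ) (v : Fin n) (h : Dseq n E w s k v < ⊤) :
    ∃ L, IsWalk E s v L ∧ Dseq n E w s k v = (walkWeight w L : WithTop ℝ) :=
  realizedByWalks_Dseq s k v h

/-- For every `k ≥ 0` and every vertex `v`, if `D_k(v) < +∞` then there
exists a directed walk from the source `s = v_1` to `v` whose weight equals `D_k(v)`.
(Here `V = Fin n` is enumerated so that BFS levels are nondecreasing and unreachable
vertices come after all reachable ones.) -/
theorem stmt1 (n : ℕ) (E : Fin n → Fin n → Prop) [DecidableRel E]
    (w : Fin n → Fin n → ℝ) (s : Fin n) (hs : s.val = 0)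
    (horder : ∀ i j : Fin n, i < j → Reaches E s i → Reaches E s j →
      level E s i ≤ level E s j)
    (hafter : ∀ i j : Fin n, i < j → Reaches E s j → Reaches E s i)
    (k : ℕ) (v : Fin n) (h : Dseq n E w s k v < ⊤) :
    ∃ L, IsWalk E s v L ∧ Dseq n E w s k v = (walkWeight w L : WithTop ℝ) :=
  stmt1_general n E w s k v h
end

section
/- Let (X, ≤) be a finite nonempty partially ordered set in which, for every x ∈ X, the principal upper set { y ∈ X : x ≤ y } is totally ordered. Then the minimum number of chains (totally ordered subsets) whose union is X equals the number of minimal elements of X. (In particular, the number of leaves of a rooted in-tree equals the minimum number of directed paths covering the tree.) -/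
/-! Two distinct minimal elements are incomparable, so a chain contains at most one of them
and any chain cover needs at least as many chains as there are minimal elements. Conversely,
every element lies above some minimal element, so the principal upper sets of the minimal
elements cover `X`, and by hypothesis each of them is a chain. -/

section ChainCover

variable {X : Type*}

lemma IsChain.eq_of_isMin [PartialOrder X] {s : Set X} (hs : IsChain (· ≤ ·) s)
    {x y : X} (hx : x ∈ s) (hy : y ∈ s) (hxm : IsMin x) (hym : IsMin y) : x = y := by
  by_contra hne
  rcases hs hx hy hne with hxy | hyx
  · exact hne (le_antisymm hxy (hym hxy))
  · exact hne (le_antisymm (hxm hyx) hyx)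

lemma natCard_isMin_le_of_isChain_cover [PartialOrder X] {k : ℕ} {c : Fin k → Set X}
    (hc : ∀ i, IsChain (· ≤ ·) (c i)) (hcov : ⋃ i, c i = Set.univ) :
    Nat.card {x : X // IsMin x} ≤ k := by
  have hmem (x : {x : X // IsMin x}) : ∃ i, (x : X) ∈ c i :=
    Set.mem_iUnion.mp (hcov ▸ Set.mem_univ (x : X))
  choose f hf using hmem
  have hinj : Function.Injective f := fun x y hxy =>
    Subtype.ext ((hc (f y)).eq_of_isMin (hxy ▸ hf x) (hf y) x.2 y.2)
  simpa using Nat.card_le_card_of_injective f hinj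

lemma iUnion_Ici_isMin [Preorder X] [WellFoundedLT X] :
    ⋃ m : {x : X // IsMin x}, Set.Ici (m : X) = Set.univ := by
  refine Set.eq_univ_of_forall fun a => Set.mem_iUnion.mpr ?_
  obtain ⟨m, hma, hm⟩ := exists_minimal_le_of_wellFoundedLT (fun _ : X => True) a trivial
  exact ⟨⟨m, fun y hy => hm.2 trivial hy⟩, hma⟩

end ChainCover

theorem stmt12_general (X : Type) [Fintype X] [PartialOrder X]
    (hup : ∀ x : X, IsChain (· ≤ ·) {y : X | x ≤ y}) :
    sInf {k : ℕ | ∃ c : Fin k → Set X,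
        (∀ i, IsChain (· ≤ ·) (c i)) ∧ (⋃ i, c i) = Set.univ} =
      Nat.card {x : X // IsMin x} := by
  set e := (Finite.equivFin {x : X // IsMin x}).symm
  have hcover : Nat.card {x : X // IsMin x} ∈ {k : ℕ | ∃ c : Fin k → Set X,
      (∀ i, IsChain (· ≤ ·) (c i)) ∧ (⋃ i, c i) = Set.univ} := by
    refine ⟨fun i => Set.Ici (e i : X), fun i => hup _, ?_⟩
    rw [← iUnion_Ici_isMin]
    exact e.surjective.iUnion_comp fun m => Set.Ici (m : X)
  refine le_antisymm (Nat.sInf_le hcover) (le_csInf ⟨_, hcover⟩ ?_)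
  rintro k ⟨c, hc, hcov⟩
  exact natCard_isMin_le_of_isChain_cover hc hcov

/-- Let `X` be a finite nonempty partially ordered set in which, for
every `x`, the principal upper set `{ y : x ≤ y }` is totally ordered. Then the minimum
number of chains (totally ordered subsets) whose union is `X` equals the number of
minimal elements of `X`. (In particular, the number of leaves of a rooted in-tree equals
the minimum number of directed paths covering the tree.) -/
theorem stmt12 (X : Type) [Fintype X] [Nonempty X] [PartialOrder X]
    (hup : ∀ x : X, IsChain (· ≤ ·) {y : X | x ≤ y}) :
    sInf {k : ℕ | ∃ c : Fin k → Set X,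
        (∀ i, IsChain (· ≤ ·) (c i)) ∧ (⋃ i, c i) = Set.univ} =
      Nat.card {x : X // IsMin x} :=
  stmt12_general X hup
end

section
/- Let n ≥ 2 and 1 ≤ d ≤ n be integers and c > 0 a real number. Let V be a finite set with |V| = n and let F be a family of subsets of V such that |F| ≤ n^c and |A| ≥ d for every A ∈ F. Let s = ⌈(c + 1) · n · ln(n) / d⌉ and let X_1, …, X_s be independent random variables, each uniformly distributed on V. Then the probability that every A ∈ F contains at least one of X_1, …, X_s is at least 1 − 1/n. -/
/-!
Union bound: a fixed set `A` with `|A| ≥ d` is missed by all `s` uniform samples with probability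
`(1 - d/n)^s ≤ exp (-s d / n) ≤ n^{-(c+1)}`, and summing over the at most `n^c` sets of `F`
bounds the failure probability by `1/n`.
-/

open Finset Fintype Real

section Counting

variable {ι V : Type*} [Fintype ι] [DecidableEq ι] [Fintype V] [DecidableEq V]

lemma card_piFinset_compl_le {A : Finset V} {d : ℕ} (hA : d ≤ #A) :
    #(piFinset fun _ : ι ↦ Aᶜ) ≤ (card V - d) ^ card ι := by
  rw [card_piFinset, prod_const, card_univ, card_compl]
  gcongr

lemma card_filter_exists_forall_notMem_le (F : Finset (Finset V)) {d : ℕ}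
    (hFd : ∀ A ∈ F, d ≤ #A) :
    #{f : ι → V | ∃ A ∈ F, ∀ i, f i ∉ A} ≤ #F * (card V - d) ^ card ι := by
  refine (card_le_card fun f hf ↦ ?_).trans <|
    card_biUnion_le_card_mul F (fun A ↦ piFinset fun _ : ι ↦ Aᶜ) _
      fun A hA ↦ card_piFinset_compl_le (hFd A hA)
  obtain ⟨A, hA, hfA⟩ := (mem_filter.1 hf).2
  exact mem_biUnion.2 ⟨A, hA, mem_piFinset.2 fun i ↦ mem_compl.2 (hfA i)⟩

theorem one_sub_card_mul_pow_le_card_hitting_div [Nonempty V] (F : Finset (Finset V)) {d : ℕ}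
    (hFd : ∀ A ∈ F, d ≤ #A) (hd : d ≤ card V) :
    1 - #F * (1 - d / card V : ℝ) ^ card ι ≤
      (Nat.card {f : ι → V // ∀ A ∈ F, ∃ i, f i ∈ A} : ℝ) / card (ι → V) := by
  have hV : (0 : ℝ) < card V := mod_cast card_pos
  set good := Nat.card {f : ι → V // ∀ A ∈ F, ∃ i, f i ∈ A}
  set bad := #{f : ι → V | ∃ A ∈ F, ∀ i, f i ∉ A}
  have hsplit : (good + bad : ℝ) = card V ^ card ι := by
    have := card_filter_add_card_filter_not (s := univ) (fun f : ι → V ↦ ∀ A ∈ F, ∃ i, f i ∈ A)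
    simp only [not_forall, not_exists, exists_prop, card_univ, card_fun] at this
    rw [← Fintype.card_subtype, ← Nat.card_eq_fintype_card] at this
    exact_mod_cast this
  have hbad : (bad : ℝ) ≤ #F * (card V - d : ℝ) ^ card ι := by
    rw [← Nat.cast_sub hd]
    exact_mod_cast card_filter_exists_forall_notMem_le F hFd
  rw [card_fun, Nat.cast_pow, le_div_iff₀ (by positivity)]
  calc (1 - #F * (1 - d / card V : ℝ) ^ card ι) * card V ^ card ι
      = card V ^ card ι - #F * (card V - d : ℝ) ^ card ι := by
        rw [one_sub_div hV.ne', div_pow]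
        field_simp
    _ ≤ good := by linarith

end Counting

lemma one_sub_pow_le_exp_neg_of_le_mul {p t : ℝ} {s : ℕ} (hp : p ≤ 1) (ht : t ≤ s * p) :
    (1 - p) ^ s ≤ exp (-t) :=
  calc (1 - p) ^ s ≤ exp (-p) ^ s := pow_le_pow_left₀ (by linarith) (one_sub_le_exp_neg p) s
    _ = exp (-(s * p)) := by rw [← exp_nat_mul]; ring_nf
    _ ≤ exp (-t) := exp_le_exp.2 (by linarith)

theorem stmt13_general (n d : ℕ) (hd1 : 1 ≤ d) (hdn : d ≤ n)
    (c : ℝ)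
    (V : Type) [Fintype V] (hV : Fintype.card V = n)
    (F : Finset (Finset V)) (hF : (F.card : ℝ) ≤ (n : ℝ) ^ c)
    (hFd : ∀ A ∈ F, d ≤ A.card)
    (s : ℕ) (hs : s = ⌈(c + 1) * n * Real.log n / d⌉₊) :
    (1 : ℝ) - 1 / n ≤
      (Nat.card {f : Fin s → V // ∀ A ∈ F, ∃ i, f i ∈ A} : ℝ) /
        (Fintype.card (Fin s → V) : ℝ) := by
  classical
  have hd : (0 : ℝ) < d := mod_cast hd1
  have hn : (0 : ℝ) < n := mod_cast hd1.trans hdn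
  have hdn' : (d / n : ℝ) ≤ 1 := div_le_one_of_le₀ (mod_cast hdn) hn.le
  have : Nonempty V := card_pos_iff.1 (hV ▸ hd1.trans hdn)
  have hmiss : (1 - d / n : ℝ) ^ s ≤ exp (-((c + 1) * log n)) := by
    refine one_sub_pow_le_exp_neg_of_le_mul hdn' ?_
    calc (c + 1) * log n = (c + 1) * n * log n / d * (d / n) := by field_simp
      _ ≤ s * (d / n) := by gcongr; exact hs ▸ Nat.le_ceil _
  have hunion : (F.card : ℝ) * (1 - d / n) ^ s ≤ 1 / n :=
    calc (F.card : ℝ) * (1 - d / n) ^ s ≤ n ^ c * n ^ (-(c + 1)) := by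
          rw [rpow_def_of_pos hn (-(c + 1)), mul_comm _ (-(c + 1)), neg_mul]
          exact mul_le_mul hF hmiss (pow_nonneg (by linarith) s) (by positivity)
      _ = 1 / n := by rw [← rpow_add hn]; norm_num [rpow_neg_one]
  have hhit := one_sub_card_mul_pow_le_card_hitting_div (ι := Fin s) F hFd (hV ▸ hdn)
  rw [hV, Fintype.card_fin] at hhit
  linarith

/-- Let `n ≥ 2` and `1 ≤ d ≤ n` be integers and `c > 0` a real number.
Let `V` be a finite set with `|V| = n` and `F` a family of subsets of `V` with
`|F| ≤ n ^ c` and `|A| ≥ d` for every `A ∈ F`. Let `s = ⌈(c + 1) · n · ln n / d⌉` and let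
`X_1, …, X_s` be independent uniform random variables on `V`, i.e. a uniform random point
of `Fin s → V`. Then the probability that every `A ∈ F` contains at least one of the
`X_i` — the proportion of tuples `f : Fin s → V` such that every `A ∈ F` meets the range
of `f` — is at least `1 − 1/n`. -/
theorem stmt13 (n d : ℕ) (hn : 2 ≤ n) (hd1 : 1 ≤ d) (hdn : d ≤ n)
    (c : ℝ) (hc : 0 < c)
    (V : Type) [Fintype V] [DecidableEq V] (hV : Fintype.card V = n)
    (F : Finset (Finset V)) (hF : (F.card : ℝ) ≤ (n : ℝ) ^ c)
    (hFd : ∀ A ∈ F, d ≤ A.card)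
    (s : ℕ) (hs : s = ⌈(c + 1) * n * Real.log n / d⌉₊) :
    (1 : ℝ) - 1 / n ≤
      (Nat.card {f : Fin s → V // ∀ A ∈ F, ∃ i, f i ∈ A} : ℝ) /
        (Fintype.card (Fin s → V) : ℝ) :=
  stmt13_general n d hd1 hdn c V hV F hF hFd s hs
end
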